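/- arXiv:2505.02162 — 5 statements merged into one kernel-verified Lean document; each statement's English description precedes it below -/
import Mathlib

section
/- Suppose φ : S → ℝ is smooth on a compact Riemannian surface S and satisfies Δφ = 4 e^{V+φ} f(e^{V+φ}) - C₀ where V is smooth away from finitely many singularities and 0 ≤ s f(s) ≤ 1 for all s > 0. If the equation has a solution, then integrating gives 0 < C₀ < 4, i.e. 0 < 2 - (4π/|S|)(M - N) < 4, equivalently |M - N| < |S|/(2π). -/
open MeasureTheory

/-
Integrating the equation over `S` kills `Δφ`, so `C₀ |S| = 4 ∫ e^{V+φ} f(e^{V+φ})`, i.e. `C₀` is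
four times the mean of a function with values in `(0, 1)`. Hence `0 < C₀ < 4`, which unwinds to
`|M - N| < |S|/(2π)`.
-/

section Integral

variable {α : Type*} [MeasurableSpace α] {μ : Measure α} {g : α → ℝ}

theorem integral_pos_of_forall_pos [NeZero μ] (hg : Integrable g μ) (hpos : ∀ x, 0 < g x) :
    0 < ∫ x, g x ∂μ := by
  rw [integral_pos_iff_support_of_nonneg (fun x => (hpos x).le) hg,
    Function.support_eq_univ fun x => (hpos x).ne']
  exact pos_iff_ne_zero.2 (Measure.measure_univ_ne_zero.2 (NeZero.ne μ))

theorem integral_lt_measureReal_univ_of_forall_lt_one [IsFiniteMeasure μ] [NeZero μ]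
    (hg : Integrable g μ) (hlt : ∀ x, g x < 1) : ∫ x, g x ∂μ < μ.real Set.univ := by
  have h : 0 < ∫ x, (1 - g x) ∂μ :=
    integral_pos_of_forall_pos ((integrable_const 1).sub hg) fun x => sub_pos.2 (hlt x)
  rw [integral_sub (integrable_const 1) hg, integral_const, smul_eq_mul, mul_one] at h
  linarith

theorem mul_measureReal_univ_eq_of_integral_eq_zero [IsFiniteMeasure μ] (a c : ℝ)
    (hg : Integrable g μ) (h : ∫ x, (a * g x - c) ∂μ = 0) :
    c * μ.real Set.univ = a * ∫ x, g x ∂μ := by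
  rw [integral_sub (hg.const_mul a) (integrable_const c), integral_const_mul, integral_const,
    smul_eq_mul] at h
  linarith

end Integral

theorem two_sub_mul_mem_Ioo_iff_abs_lt {A d : ℝ} (hA : 0 < A) :
    2 - 4 * Real.pi / A * d ∈ Set.Ioo 0 4 ↔ |d| < A / (2 * Real.pi) := by
  have hπ : 0 < 2 * Real.pi := by positivity
  have key : 4 * Real.pi / A * d = 2 * (2 * Real.pi * d / A) := by ring
  have hscale : |d| < A / (2 * Real.pi) ↔ |2 * Real.pi * d / A| < 1 := by
    rw [abs_div, abs_mul, abs_of_pos hπ, abs_of_pos hA, div_lt_one hA, lt_div_iff₀ hπ, mul_comm]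
  rw [Set.mem_Ioo, key, hscale, abs_lt]
  constructor <;> rintro ⟨h₁, h₂⟩ <;> constructor <;> linarith

theorem stmt8_general {S : Type*} [MeasurableSpace S] (μ : Measure S) [IsFiniteMeasure μ]
    (hpos : 0 < (μ Set.univ).toReal)
    (f : ℝ → ℝ) (hf : ∀ s : ℝ, 0 < s → 0 < s * f s ∧ s * f s < 1)
    (M N : ℕ) (C₀ : ℝ)
    (hC : C₀ = 2 - (4 * Real.pi / (μ Set.univ).toReal) * ((M : ℝ) - (N : ℝ)))
    (V φ Lap : S → ℝ)
    (hEq : ∀ x : S,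
      Lap x = 4 * Real.exp (V x + φ x) * f (Real.exp (V x + φ x)) - C₀)
    (hIntRHS : Integrable
      (fun x => Real.exp (V x + φ x) * f (Real.exp (V x + φ x))) μ)
    (hZero : ∫ x, Lap x ∂μ = 0) :
    0 < C₀ ∧ C₀ < 4 ∧
      |(M : ℝ) - (N : ℝ)| < (μ Set.univ).toReal / (2 * Real.pi) := by
  have : NeZero μ := ⟨by rintro rfl; simp at hpos⟩
  have hmean : C₀ * μ.real Set.univ =
      4 * ∫ x, Real.exp (V x + φ x) * f (Real.exp (V x + φ x)) ∂μ :=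
    mul_measureReal_univ_eq_of_integral_eq_zero 4 C₀ hIntRHS <| by
      simpa only [hEq, mul_assoc] using hZero
  have hlo := integral_pos_of_forall_pos hIntRHS fun x => (hf _ (Real.exp_pos _)).1
  have hhi :=
    integral_lt_measureReal_univ_of_forall_lt_one hIntRHS fun x => (hf _ (Real.exp_pos _)).2
  have hC₀ : C₀ ∈ Set.Ioo 0 4 := by
    rw [measureReal_def] at hmean hhi
    constructor <;> nlinarith
  exact ⟨hC₀.1, hC₀.2, (two_sub_mul_mem_Ioo_iff_abs_lt hpos).1 (hC ▸ hC₀)⟩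

/-- Necessity of the bound `|M - N| < |S|/(2π)`: if `φ` solves
`Δφ = 4 e^{V+φ} f(e^{V+φ}) - C₀` on a compact surface `S` (so that the integral
of `Δφ` vanishes), with `0 < s f s < 1` for `s > 0` and
`C₀ = 2 - (4π/|S|)(M - N)`, then `0 < C₀ < 4`, i.e. `|M - N| < |S|/(2π)`. -/
theorem stmt8 {S : Type*} [MeasurableSpace S] (μ : Measure S) [IsFiniteMeasure μ]
    (hpos : 0 < (μ Set.univ).toReal)
    (f : ℝ → ℝ) (hf : ∀ s : ℝ, 0 < s → 0 < s * f s ∧ s * f s < 1)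
    (M N : ℕ) (C₀ : ℝ)
    (hC : C₀ = 2 - (4 * Real.pi / (μ Set.univ).toReal) * ((M : ℝ) - (N : ℝ)))
    (V φ Lap : S → ℝ)
    (hEq : ∀ x : S,
      Lap x = 4 * Real.exp (V x + φ x) * f (Real.exp (V x + φ x)) - C₀)
    (hInt : Integrable Lap μ)
    (hIntRHS : Integrable
      (fun x => Real.exp (V x + φ x) * f (Real.exp (V x + φ x))) μ)
    (hZero : ∫ x, Lap x ∂μ = 0) :
    0 < C₀ ∧ C₀ < 4 ∧
      |(M : ℝ) - (N : ℝ)| < (μ Set.univ).toReal / (2 * Real.pi) :=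
  stmt8_general μ hpos f hf M N C₀ hC V φ Lap hEq hIntRHS hZero
end

section
/- Let g : ℝ → ℝ be defined by g(c) = ∫_S e^{h(x)+c} f(e^{h(x)+c}) dσ(x) where h : S → ℝ is measurable with e^h integrable, S has finite measure |S|, and f satisfies: s ↦ s f(s) is continuous, nondecreasing, strictly increasing where it takes values in (0,1), with s f(s) → 0 as s → 0⁺ and s f(s) → 1 as s → ∞. Then g is continuous, nondecreasing, lim_{c→-∞} g(c) = 0, lim_{c→∞} g(c) = |S|, and for every t ∈ (0, |S|), if s f(s) is strictly increasing then there is a unique c with g(c) = t. -/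
open MeasureTheory Filter Set Topology

/-!
Writing `Φ u = eᵘ f(eᵘ)`, we have `g c = ∫ Φ (h x + c) dμ` with `Φ` continuous, strictly increasing
and valued in `[0, 1]`. The constant `1` is an integrable dominating function because `μ` is finite,
so continuity of `g` and its limits at `±∞` follow by dominated convergence from those of `Φ`;
strict monotonicity of `Φ` passes to `g` once `μ ≠ 0`, and the intermediate value theorem then
yields the unique solution of `g c = t`.
-/

theorem MeasureTheory.integral_lt_integral_of_forall_lt {S : Type*} [MeasurableSpace S]
    {μ : Measure S} [NeZero μ] {φ ψ : S → ℝ} (hφ : Integrable φ μ) (hψ : Integrable ψ μ)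
    (hlt : ∀ x, φ x < ψ x) : ∫ x, φ x ∂μ < ∫ x, ψ x ∂μ := by
  have hsupp : Function.support (ψ - φ) = univ :=
    eq_univ_of_forall fun x => (sub_pos.2 (hlt x)).ne'
  have hpos : 0 < ∫ x, (ψ - φ) x ∂μ :=
    (integral_pos_iff_support_of_nonneg (fun x => (sub_pos.2 (hlt x)).le) (hψ.sub hφ)).2
      (hsupp ▸ Measure.measure_univ_pos.2 (NeZero.ne μ))
  rw [Pi.sub_def, integral_sub hψ hφ] at hpos
  linarith

theorem StrictMono.existsUnique_eq_of_tendsto {g : ℝ → ℝ} (hmono : StrictMono g)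
    (hcont : Continuous g) {a b : ℝ} (ha : Tendsto g atBot (𝓝 a)) (hb : Tendsto g atTop (𝓝 b))
    {t : ℝ} (ht : t ∈ Ioo a b) : ∃! c, g c = t := by
  obtain ⟨c, hc⟩ := mem_range_of_exists_le_of_exists_ge hcont
    ((ha.eventually (eventually_lt_nhds ht.1)).exists.imp fun _ => le_of_lt)
    ((hb.eventually (eventually_gt_nhds ht.2)).exists.imp fun _ => le_of_lt)
  exact ⟨c, hc, fun c' hc' => hmono.injective (hc'.trans hc.symm)⟩

section ShiftedIntegral

variable {S : Type*} [MeasurableSpace S] (μ : Measure S) {h : S → ℝ}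
  {E : Type*} [NormedAddCommGroup E]

theorem aestronglyMeasurable_comp_add_const (hh : AEMeasurable h μ) {Φ : ℝ → E}
    (hΦ : Continuous Φ) (c : ℝ) : AEStronglyMeasurable (fun x => Φ (h x + c)) μ :=
  hΦ.comp_aestronglyMeasurable (hh.add_const c).aestronglyMeasurable

variable [IsFiniteMeasure μ] {C : ℝ}

theorem integrable_comp_add_const (hh : AEMeasurable h μ) {Φ : ℝ → E} (hΦ : Continuous Φ)
    (hbd : ∀ u, ‖Φ u‖ ≤ C) (c : ℝ) : Integrable (fun x => Φ (h x + c)) μ :=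
  (integrable_const C).mono' (aestronglyMeasurable_comp_add_const μ hh hΦ c)
    (ae_of_all _ fun _ => hbd _)

variable [NormedSpace ℝ E]

theorem continuous_integral_comp_add (hh : AEMeasurable h μ) {Φ : ℝ → E} (hΦ : Continuous Φ)
    (hbd : ∀ u, ‖Φ u‖ ≤ C) : Continuous fun c => ∫ x, Φ (h x + c) ∂μ :=
  continuous_of_dominated (aestronglyMeasurable_comp_add_const μ hh hΦ)
    (fun _ => ae_of_all _ fun _ => hbd _) (integrable_const C)
    (ae_of_all _ fun _ => hΦ.comp (continuous_const_add _))

theorem tendsto_integral_comp_add [CompleteSpace E] (hh : AEMeasurable h μ) {Φ : ℝ → E}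
    (hΦ : Continuous Φ) (hbd : ∀ u, ‖Φ u‖ ≤ C) {l : Filter ℝ} [l.IsCountablyGenerated] {L : E}
    (hlim : ∀ x, Tendsto (fun c => Φ (h x + c)) l (𝓝 L)) :
    Tendsto (fun c => ∫ x, Φ (h x + c) ∂μ) l (𝓝 (μ.real univ • L)) := by
  rw [← integral_const]
  exact tendsto_integral_filter_of_dominated_convergence (fun _ => C)
    (Eventually.of_forall (aestronglyMeasurable_comp_add_const μ hh hΦ))
    (Eventually.of_forall fun _ => ae_of_all _ fun _ => hbd _) (integrable_const C)
    (ae_of_all _ hlim)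

theorem tendsto_integral_comp_add_atBot [CompleteSpace E] (hh : AEMeasurable h μ) {Φ : ℝ → E}
    (hΦ : Continuous Φ) (hbd : ∀ u, ‖Φ u‖ ≤ C) {L : E} (hlim : Tendsto Φ atBot (𝓝 L)) :
    Tendsto (fun c => ∫ x, Φ (h x + c) ∂μ) atBot (𝓝 (μ.real univ • L)) :=
  tendsto_integral_comp_add μ hh hΦ hbd fun _ =>
    hlim.comp (tendsto_atBot_add_const_left _ _ tendsto_id)

theorem tendsto_integral_comp_add_atTop [CompleteSpace E] (hh : AEMeasurable h μ) {Φ : ℝ → E}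
    (hΦ : Continuous Φ) (hbd : ∀ u, ‖Φ u‖ ≤ C) {L : E} (hlim : Tendsto Φ atTop (𝓝 L)) :
    Tendsto (fun c => ∫ x, Φ (h x + c) ∂μ) atTop (𝓝 (μ.real univ • L)) :=
  tendsto_integral_comp_add μ hh hΦ hbd fun _ =>
    hlim.comp (tendsto_atTop_add_const_left _ _ tendsto_id)

theorem monotone_integral_comp_add (hh : AEMeasurable h μ) {Φ : ℝ → ℝ} (hΦ : Continuous Φ)
    (hbd : ∀ u, ‖Φ u‖ ≤ C) (hmono : Monotone Φ) :
    Monotone fun c => ∫ x, Φ (h x + c) ∂μ := fun _ _ hc =>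
  integral_mono (integrable_comp_add_const μ hh hΦ hbd _)
    (integrable_comp_add_const μ hh hΦ hbd _) fun _ => hmono (add_le_add_right hc _)

theorem strictMono_integral_comp_add [NeZero μ] (hh : AEMeasurable h μ) {Φ : ℝ → ℝ}
    (hΦ : Continuous Φ) (hbd : ∀ u, ‖Φ u‖ ≤ C) (hmono : StrictMono Φ) :
    StrictMono fun c => ∫ x, Φ (h x + c) ∂μ := fun _ _ hc =>
  integral_lt_integral_of_forall_lt (integrable_comp_add_const μ hh hΦ hbd _)
    (integrable_comp_add_const μ hh hΦ hbd _) fun _ => hmono (add_lt_add_right hc _)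

end ShiftedIntegral

theorem stmt9_general {S : Type*} [MeasurableSpace S] (μ : Measure S) [IsFiniteMeasure μ]
    (h : S → ℝ) (hmeas : Measurable h)
    (f : ℝ → ℝ)
    (hcont : ContinuousOn (fun s => s * f s) (Set.Ioi (0 : ℝ)))
    (hmono : StrictMonoOn (fun s => s * f s) (Set.Ioi (0 : ℝ)))
    (hbd : ∀ s : ℝ, 0 < s → 0 ≤ s * f s ∧ s * f s ≤ 1)
    (hlim0 : Filter.Tendsto (fun s => s * f s) (nhdsWithin 0 (Set.Ioi 0)) (nhds 0))
    (hlim1 : Filter.Tendsto (fun s => s * f s) Filter.atTop (nhds 1))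
    (g : ℝ → ℝ)
    (hg : ∀ c : ℝ,
      g c = ∫ x, Real.exp (h x + c) * f (Real.exp (h x + c)) ∂μ) :
    Continuous g ∧ Monotone g ∧
    Filter.Tendsto g Filter.atBot (nhds 0) ∧
    Filter.Tendsto g Filter.atTop (nhds (μ Set.univ).toReal) ∧
    ∀ t ∈ Set.Ioo (0 : ℝ) (μ Set.univ).toReal, ∃! c : ℝ, g c = t := by
  set Φ : ℝ → ℝ := fun u => Real.exp u * f (Real.exp u)
  have hexp : ∀ u, Real.exp u ∈ Ioi 0 := Real.exp_pos
  have hΦc : Continuous Φ := hcont.comp_continuous Real.continuous_exp hexp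
  have hΦm : StrictMono Φ := fun a b hab => hmono (hexp a) (hexp b) (Real.exp_lt_exp.2 hab)
  have hΦbd : ∀ u, ‖Φ u‖ ≤ 1 := fun u => by
    obtain ⟨h0, h1⟩ := hbd _ (hexp u)
    rwa [Real.norm_eq_abs, abs_of_nonneg h0]
  have hΦ0 : Tendsto Φ atBot (𝓝 0) :=
    hlim0.comp (tendsto_nhdsWithin_of_tendsto_nhds_of_eventually_within _
      Real.tendsto_exp_atBot (Eventually.of_forall hexp))
  have hΦ1 : Tendsto Φ atTop (𝓝 1) := hlim1.comp Real.tendsto_exp_atTop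
  obtain rfl : g = fun c => ∫ x, Φ (h x + c) ∂μ := funext hg
  have hmeas' := hmeas.aemeasurable (μ := μ)
  have hbot := tendsto_integral_comp_add_atBot μ hmeas' hΦc hΦbd hΦ0
  have htop := tendsto_integral_comp_add_atTop μ hmeas' hΦc hΦbd hΦ1
  simp only [smul_eq_mul, mul_zero, mul_one, measureReal_def] at hbot htop
  refine ⟨continuous_integral_comp_add μ hmeas' hΦc hΦbd,
    monotone_integral_comp_add μ hmeas' hΦc hΦbd hΦm.monotone, hbot, htop, fun t ht => ?_⟩
  have : NeZero μ := ⟨fun hμ => by simp [hμ] at ht⟩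
  exact (strictMono_integral_comp_add μ hmeas' hΦc hΦbd hΦm).existsUnique_eq_of_tendsto
    (continuous_integral_comp_add μ hmeas' hΦc hΦbd) hbot htop ht

/-- Properties of `g c = ∫_S e^{h+c} f(e^{h+c}) dσ`: `g` is continuous and
nondecreasing, `g → 0` at `-∞`, `g → |S|` at `+∞`, and for every
`t ∈ (0, |S|)` there is a unique `c` with `g c = t` (using strict
monotonicity of `s ↦ s f s`). -/
theorem stmt9 {S : Type*} [MeasurableSpace S] (μ : Measure S) [IsFiniteMeasure μ]
    (h : S → ℝ) (hmeas : Measurable h)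
    (hint : Integrable (fun x => Real.exp (h x)) μ)
    (f : ℝ → ℝ)
    (hcont : ContinuousOn (fun s => s * f s) (Set.Ioi (0 : ℝ)))
    (hmono : StrictMonoOn (fun s => s * f s) (Set.Ioi (0 : ℝ)))
    (hbd : ∀ s : ℝ, 0 < s → 0 ≤ s * f s ∧ s * f s ≤ 1)
    (hlim0 : Filter.Tendsto (fun s => s * f s) (nhdsWithin 0 (Set.Ioi 0)) (nhds 0))
    (hlim1 : Filter.Tendsto (fun s => s * f s) Filter.atTop (nhds 1))
    (g : ℝ → ℝ)
    (hg : ∀ c : ℝ,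
      g c = ∫ x, Real.exp (h x + c) * f (Real.exp (h x + c)) ∂μ) :
    Continuous g ∧ Monotone g ∧
    Filter.Tendsto g Filter.atBot (nhds 0) ∧
    Filter.Tendsto g Filter.atTop (nhds (μ Set.univ).toReal) ∧
    ∀ t ∈ Set.Ioo (0 : ℝ) (μ Set.univ).toReal, ∃! c : ℝ, g c = t :=
  stmt9_general μ h hmeas f hcont hmono hbd hlim0 hlim1 g hg
end

section
/- Let v₁ be a negative solution of the Taubes equation Δv₁ = e^{v₁} - 1 + 4π Σ_{s=1}^N δ_{p_s} on ℝ² with v₁ → 0 at infinity. If f satisfies 4 s f(s) ≤ 1 + s on [0,1] and s f(s) + (1/s) f(1/s) ≥ 1 on (0,1], then v₊ = -v₁ is a supersolution of Δv = 4 e^v f(e^v) - 2 + 4π Σ δ_{q_s} - 4π Σ δ_{p_s}, i.e., away from the singular points, Δ(-v₁) ≤ 4 e^{-v₁} f(e^{-v₁}) - 2. -/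
/-!
With `s = e^{v₁} ∈ (0,1]` the Taubes equation gives `Δ(-v₁) = 1 - s`, and the claim becomes the
pointwise bound `1 - s ≤ 4 s⁻¹ f(s⁻¹) - 2`. This follows by chaining (C1), in the form
`1 - s ≤ 2 - 4 s f(s)`, with (C2), in the form `2 - 4 s f(s) ≤ 4 s⁻¹ f(s⁻¹) - 2`.
-/

/-- The flat Laplacian of a function on `ℝ²`. -/
noncomputable def lapl (φ : ℝ × ℝ → ℝ) (x : ℝ × ℝ) : ℝ :=
  deriv (fun t => deriv (fun s => φ (s, x.2)) t) x.1 +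
    deriv (fun t => deriv (fun s => φ (x.1, s)) t) x.2

theorem lapl_neg (φ : ℝ × ℝ → ℝ) (x : ℝ × ℝ) : lapl (fun y => -φ y) x = -lapl φ x := by
  simp only [lapl, deriv.fun_neg]
  ring

theorem one_sub_le_four_mul_inv_mul_sub_two {f : ℝ → ℝ} {s : ℝ}
    (hC1 : 4 * (s * f s) ≤ 1 + s) (hC2 : s * f s + s⁻¹ * f s⁻¹ ≥ 1) :
    1 - s ≤ 4 * s⁻¹ * f s⁻¹ - 2 :=
  calc 1 - s ≤ 2 - 4 * (s * f s) := by linarith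
    _ ≤ 4 * s⁻¹ * f s⁻¹ - 2 := by linarith

/-- If `v₁ < 0` solves the Taubes equation `Δv₁ = e^{v₁} - 1` away from the
singular points `p₁,…,p_N`, and `f` satisfies (C1): `4 s f s ≤ 1 + s` on `[0,1]`
and (C2): `s f s + (1/s) f (1/s) ≥ 1` on `(0,1]`, then `v₊ = -v₁` is a
supersolution: away from the singular points,
`Δ(-v₁) ≤ 4 e^{-v₁} f(e^{-v₁}) - 2`. -/
theorem stmt11 (f : ℝ → ℝ)
    (hC1 : ∀ s ∈ Set.Icc (0 : ℝ) 1, 4 * (s * f s) ≤ 1 + s)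
    (hC2 : ∀ s ∈ Set.Ioc (0 : ℝ) 1, s * f s + (1 / s) * f (1 / s) ≥ 1)
    (N : ℕ) (p : Fin N → ℝ × ℝ) (v₁ : ℝ × ℝ → ℝ)
    (hneg : ∀ x : ℝ × ℝ, x ∉ Set.range p → v₁ x < 0)
    (hTaubes : ∀ x : ℝ × ℝ, x ∉ Set.range p →
      lapl v₁ x = Real.exp (v₁ x) - 1) :
    ∀ x : ℝ × ℝ, x ∉ Set.range p →
      lapl (fun y => -v₁ y) x ≤
        4 * Real.exp (-v₁ x) * f (Real.exp (-v₁ x)) - 2 := by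
  intro x hx
  have hs : Real.exp (v₁ x) ∈ Set.Ioc (0 : ℝ) 1 :=
    ⟨Real.exp_pos _, (Real.exp_lt_one_iff.mpr (hneg x hx)).le⟩
  have h2 := hC2 _ hs
  rw [one_div] at h2
  rw [lapl_neg, hTaubes x hx, Real.exp_neg]
  linarith [one_sub_le_four_mul_inv_mul_sub_two (hC1 _ (Set.Ioc_subset_Icc_self hs)) h2]
end

section
/- Let u(z) = ω(z)(z - z₀)^{-m} near z₀ with ω smooth and nonvanishing, m ≥ 1, and let f satisfy lim_{s→∞} s f(s) = 1. Then the local Thom charge τ(z₀) = lim_{r→0} ∮_{|z-z₀|=r} |u|² f(|u|²)(-∂₂ v dx₁ + ∂₁ v dx₂) with v = ln|u|² equals 4πm. -/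
open Filter

private lemma deriv_helper14 (u : ℂ → ℂ) (z₀ : ℂ) (m : ℕ)
    (γ : ℂ → ℝ) (ε : ℝ)
    (hγ : ContDiff ℝ (⊤ : ℕ∞) γ) (hγpos : ∀ z ∈ Metric.ball z₀ ε, 0 < γ z)
    (hu : ∀ z ∈ Metric.ball z₀ ε, z ≠ z₀ →
      ‖u z‖ ^ 2 = ‖z - z₀‖ ^ (-(2 * (m : ℤ))) * γ z)
    (r : ℝ) (hr : r ∈ Set.Ioo (0:ℝ) ε) (θ : ℝ) :
    deriv (fun ρ : ℝ =>
        Real.log (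
          ‖u (z₀ + (ρ : ℂ) * Complex.exp ((θ : ℂ) * Complex.I))‖ ^ 2)) r
      = -(2*m) * r⁻¹ +
        (γ (z₀ + (r : ℂ) * Complex.exp ((θ : ℂ) * Complex.I)))⁻¹ *
          (fderiv ℝ γ (z₀ + (r : ℂ) * Complex.exp ((θ : ℂ) * Complex.I))
            (Complex.exp ((θ : ℂ) * Complex.I))) := by
  set w : ℂ := Complex.exp ((θ:ℂ) * Complex.I) with hw
  have habsw : ‖w‖ = 1 := Complex.norm_exp_ofReal_mul_I θ
  set z : ℝ → ℂ := fun ρ : ℝ => z₀ + (ρ:ℂ) * w with hz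
  have hmem : ∀ ρ ∈ Set.Ioo (0:ℝ) ε, z ρ ∈ Metric.ball z₀ ε := by
    intro ρ hρ
    simp only [Metric.mem_ball, z, Complex.dist_eq, add_sub_cancel_left]
    rw [norm_mul, habsw, Complex.norm_real, Real.norm_eq_abs, mul_one, abs_of_pos hρ.1]
    exact hρ.2
  have hzr : z r ∈ Metric.ball z₀ ε := hmem r hr
  have hγr : 0 < γ (z r) := hγpos _ hzr
  have hdz : HasDerivAt z w r := by
    have h := (Complex.ofRealCLM.hasDerivAt (x := r)).mul_const w
    simpa [z] using h.const_add z₀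
  have hdγ : HasDerivAt (fun ρ => γ (z ρ)) (fderiv ℝ γ (z r) w) r :=
    ((hγ.differentiable (by simp)).differentiableAt.hasFDerivAt).comp_hasDerivAt r hdz
  have hdlogγ : HasDerivAt (fun ρ => Real.log (γ (z ρ)))
      ((γ (z r))⁻¹ * fderiv ℝ γ (z r) w) r := by
    have := (Real.hasDerivAt_log hγr.ne').comp r hdγ
    exact this
  have hdlog : HasDerivAt (fun ρ : ℝ => (-(2*m):ℝ) * Real.log ρ)
      ((-(2*m):ℝ) * r⁻¹) r := by
    have := (Real.hasDerivAt_log hr.1.ne').const_mul ((-(2*m):ℝ))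
    simpa using this
  have hg : HasDerivAt (fun ρ : ℝ => (-(2*m):ℝ) * Real.log ρ + Real.log (γ (z ρ)))
      ((-(2*m):ℝ) * r⁻¹ + (γ (z r))⁻¹ * fderiv ℝ γ (z r) w) r := hdlog.add hdlogγ
  have heq : (fun ρ : ℝ => Real.log (‖u (z₀ + (ρ : ℂ) * w)‖ ^ 2))
      =ᶠ[nhds r] (fun ρ : ℝ => (-(2*m):ℝ) * Real.log ρ + Real.log (γ (z ρ))) := by
    filter_upwards [isOpen_Ioo.mem_nhds hr] with ρ hρ
    have hzρ := hmem ρ hρ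
    have hne : z ρ ≠ z₀ := by
      simp only [z, ne_eq, add_eq_left, mul_eq_zero, not_or]
      exact ⟨Complex.ofReal_ne_zero.mpr hρ.1.ne', fun h => by
        simp [h] at habsw⟩
    have h1 := hu (z ρ) hzρ hne
    have habs : ‖z ρ - z₀‖ = ρ := by
      simp only [z, add_sub_cancel_left]
      rw [norm_mul, habsw, Complex.norm_real, Real.norm_eq_abs, mul_one, abs_of_pos hρ.1]
    rw [show z₀ + (ρ:ℂ) * w = z ρ from rfl, h1, habs,
      Real.log_mul (zpow_ne_zero _ hρ.1.ne') (hγpos _ hzρ).ne', Real.log_zpow]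
    push_cast
    ring
  rw [(hg.congr_of_eventuallyEq heq).deriv]

/-- Local Thom charge at a pole: if `|u|² = |z - z₀|^{-2m} γ(z)` near `z₀`
with `γ` smooth and positive and `m ≥ 1`, and `s f s → 1` as `s → ∞`, then
`τ(z₀) = lim_{r→0} ∮_{|z-z₀|=r} |u|² f(|u|²)(-∂₂v dx₁ + ∂₁v dx₂)`, which in
polar coordinates reads `∫₀^{-2π} |u|² f(|u|²) r ∂_r v dθ` with `v = ln|u|²`,
equals `4πm`. -/
theorem stmt14 (u : ℂ → ℂ) (z₀ : ℂ) (m : ℕ) (hm : 1 ≤ m)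
    (γ : ℂ → ℝ) (ε : ℝ) (hε : 0 < ε)
    (hγ : ContDiff ℝ (⊤ : ℕ∞) γ) (hγpos : ∀ z ∈ Metric.ball z₀ ε, 0 < γ z)
    (hu : ∀ z ∈ Metric.ball z₀ ε, z ≠ z₀ →
      ‖u z‖ ^ 2 = ‖z - z₀‖ ^ (-(2 * (m : ℤ))) * γ z)
    (f : ℝ → ℝ) (hfcont : ContinuousOn f (Set.Ioi (0 : ℝ)))
    (hlim : Tendsto (fun s => s * f s) atTop (nhds 1))
    (τ : ℝ → ℝ)
    (hτ : ∀ r ∈ Set.Ioo (0 : ℝ) ε,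
      τ r = ∫ θ in (0 : ℝ)..(-(2 * Real.pi)),
        (‖u (z₀ + (r : ℂ) * Complex.exp ((θ : ℂ) * Complex.I))‖ ^ 2) *
          f (‖u (z₀ + (r : ℂ) * Complex.exp ((θ : ℂ) * Complex.I))‖ ^ 2) *
          (r * deriv (fun ρ : ℝ =>
            Real.log (
              ‖u (z₀ + (ρ : ℂ) * Complex.exp ((θ : ℂ) * Complex.I))‖ ^ 2)) r)) :
    Tendsto τ (nhdsWithin 0 (Set.Ioi 0)) (nhds (4 * Real.pi * (m : ℝ))) := by
  have hπ := Real.pi_pos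
  set ε' : ℝ := ε / 2 with hε'def
  have hε' : 0 < ε' := by positivity
  have hε'lt : ε' < ε := by simp [hε'def]; linarith
  have hKsub : Metric.closedBall z₀ ε' ⊆ Metric.ball z₀ ε := fun z hz =>
    lt_of_le_of_lt (Metric.mem_closedBall.mp hz) hε'lt
  -- lower bound for γ
  obtain ⟨x₀, hx₀, hmin⟩ := (isCompact_closedBall z₀ ε').exists_isMinOn
    ⟨z₀, Metric.mem_closedBall_self hε'.le⟩ hγ.continuous.continuousOn
  set c₁ : ℝ := γ x₀ with hc₁def
  have hc₁pos : 0 < c₁ := hγpos x₀ (hKsub hx₀)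
  have hc₁ : ∀ z ∈ Metric.closedBall z₀ ε', c₁ ≤ γ z := fun z hz => hmin hz
  -- upper bound for fderiv
  obtain ⟨C₀, hC₀⟩ := (isCompact_closedBall z₀ ε').exists_bound_of_continuousOn
    ((hγ.continuous_fderiv (by simp)).continuousOn)
  set C : ℝ := max C₀ 0 with hCdef
  have hC0 : 0 ≤ C := le_max_right _ _
  have hC : ∀ z ∈ Metric.closedBall z₀ ε', ‖fderiv ℝ γ z‖ ≤ C :=
    fun z hz => (hC₀ z hz).trans (le_max_left _ _)
  rw [Metric.tendsto_nhdsWithin_nhds]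
  intro e he
  set η : ℝ := min 1 (e / (4 * Real.pi * (m + 1) + 1)) with hηdef
  have hηpos : 0 < η := by
    apply lt_min one_pos
    positivity
  have hη1 : η ≤ 1 := min_le_left _ _
  have hη2 : η ≤ e / (4 * Real.pi * (m + 1) + 1) := min_le_right _ _
  -- M from hlim
  obtain ⟨M, hM⟩ := (Metric.tendsto_atTop.mp hlim) η hηpos
  set M' : ℝ := max M 1 with hM'def
  have hM'pos : 0 < M' := lt_of_lt_of_le one_pos (le_max_right _ _)
  set δ : ℝ := min ε' (min 1 (min (c₁ / M') (η * c₁ / (C + 1)))) with hδdef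
  have hδpos : 0 < δ := by
    apply lt_min hε'
    apply lt_min one_pos
    apply lt_min <;> positivity
  refine ⟨δ, hδpos, ?_⟩
  intro r hrIoi hrdist
  have hr0 : 0 < r := hrIoi
  rw [Real.dist_eq, sub_zero, abs_of_pos hr0] at hrdist
  have hrε' : r ≤ ε' := le_of_lt (lt_of_lt_of_le hrdist (min_le_left _ _))
  have hr1 : r ≤ 1 := le_of_lt (lt_of_lt_of_le hrdist
    ((min_le_right _ _).trans (min_le_left _ _)))
  have hrM : r ≤ c₁ / M' := le_of_lt (lt_of_lt_of_le hrdist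
    ((min_le_right _ _).trans ((min_le_right _ _).trans (min_le_left _ _))))
  have hrC : r ≤ η * c₁ / (C + 1) := le_of_lt (lt_of_lt_of_le hrdist
    ((min_le_right _ _).trans ((min_le_right _ _).trans (min_le_right _ _))))
  have hrIoo : r ∈ Set.Ioo (0:ℝ) ε := ⟨hr0, lt_of_le_of_lt hrε' hε'lt⟩
  -- notation
  set Z : ℝ → ℂ := fun θ => z₀ + (r:ℂ) * Complex.exp ((θ:ℂ) * Complex.I) with hZdef
  have habsw : ∀ θ : ℝ, ‖Complex.exp ((θ:ℂ) * Complex.I)‖ = 1 :=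
    Complex.norm_exp_ofReal_mul_I
  have hZK : ∀ θ : ℝ, Z θ ∈ Metric.closedBall z₀ ε' := by
    intro θ
    simp only [Z, Metric.mem_closedBall, Complex.dist_eq, add_sub_cancel_left]
    rw [norm_mul, habsw, Complex.norm_real, Real.norm_eq_abs, mul_one, abs_of_pos hr0]
    exact hrε'
  have hZball : ∀ θ : ℝ, Z θ ∈ Metric.ball z₀ ε := fun θ => hKsub (hZK θ)
  have hZne : ∀ θ : ℝ, Z θ ≠ z₀ := by
    intro θ
    simp only [Z, ne_eq, add_eq_left, mul_eq_zero, not_or]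
    exact ⟨Complex.ofReal_ne_zero.mpr hr0.ne', Complex.exp_ne_zero _⟩
  have hγZpos : ∀ θ : ℝ, 0 < γ (Z θ) := fun θ => hγpos _ (hZball θ)
  have hγZc₁ : ∀ θ : ℝ, c₁ ≤ γ (Z θ) := fun θ => hc₁ _ (hZK θ)
  have habsZ : ∀ θ : ℝ, ‖Z θ - z₀‖ = r := by
    intro θ
    simp only [Z, add_sub_cancel_left]
    rw [norm_mul, habsw, Complex.norm_real, Real.norm_eq_abs, mul_one, abs_of_pos hr0]
  -- s
  set s : ℝ → ℝ := fun θ => r ^ (-(2 * (m:ℤ))) * γ (Z θ) with hsdef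
  have hsabs : ∀ θ : ℝ, ‖u (Z θ)‖ ^ 2 = s θ := by
    intro θ
    rw [hu (Z θ) (hZball θ) (hZne θ), habsZ θ]
  have hrpow : (0:ℝ) < r ^ (-(2 * (m:ℤ))) := zpow_pos hr0 _
  have hspos : ∀ θ : ℝ, 0 < s θ := fun θ => mul_pos hrpow (hγZpos θ)
  -- s ≥ M
  have hsM : ∀ θ : ℝ, M ≤ s θ := by
    intro θ
    have h1 : r ^ (2 * m) ≤ r := pow_le_of_le_one hr0.le hr1 (by omega)
    have h2 : r ^ (-(2 * (m:ℤ))) = (r ^ (2 * m))⁻¹ := by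
      rw [zpow_neg]
      norm_cast
    have h3 : r⁻¹ ≤ r ^ (-(2 * (m:ℤ))) := by
      rw [h2]
      exact inv_anti₀ (by positivity) h1
    have h4 : M' / c₁ ≤ r⁻¹ := by
      have h := inv_anti₀ hr0 hrM
      rwa [inv_div] at h
    have h5 : M' ≤ s θ := by
      calc M' = (M' / c₁) * c₁ := by field_simp
        _ ≤ r⁻¹ * c₁ := by
            apply mul_le_mul_of_nonneg_right h4 hc₁pos.le
        _ ≤ r ^ (-(2 * (m:ℤ))) * c₁ := mul_le_mul_of_nonneg_right h3 hc₁pos.le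
        _ ≤ r ^ (-(2 * (m:ℤ))) * γ (Z θ) :=
            mul_le_mul_of_nonneg_left (hγZc₁ θ) hrpow.le
    exact (le_max_left M 1).trans h5
  have hsfη : ∀ θ : ℝ, |s θ * f (s θ) - 1| ≤ η := by
    intro θ
    have := hM (s θ) (hsM θ)
    rw [Real.dist_eq] at this
    exact this.le
  -- D and q
  set D : ℝ → ℝ := fun θ =>
    fderiv ℝ γ (Z θ) (Complex.exp ((θ:ℂ) * Complex.I)) with hDdef
  have hDbound : ∀ θ : ℝ, |D θ| ≤ C := by
    intro θ
    have h1 : ‖fderiv ℝ γ (Z θ) (Complex.exp ((θ:ℂ) * Complex.I))‖ ≤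
        ‖fderiv ℝ γ (Z θ)‖ * ‖Complex.exp ((θ:ℂ) * Complex.I)‖ :=
      ContinuousLinearMap.le_opNorm _ _
    rw [habsw, mul_one] at h1
    exact h1.trans (hC _ (hZK θ))
  set q : ℝ → ℝ := fun θ => r * ((γ (Z θ))⁻¹ * D θ) with hqdef
  have hqbound : ∀ θ : ℝ, |q θ| ≤ η := by
    intro θ
    have h1 : |q θ| = r * ((γ (Z θ))⁻¹ * |D θ|) := by
      rw [hqdef]
      rw [abs_mul, abs_mul, abs_of_pos hr0, abs_of_pos (inv_pos.mpr (hγZpos θ))]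
    rw [h1]
    have h2 : (γ (Z θ))⁻¹ ≤ c₁⁻¹ := inv_anti₀ hc₁pos (hγZc₁ θ)
    calc r * ((γ (Z θ))⁻¹ * |D θ|) ≤ r * (c₁⁻¹ * C) := by
          apply mul_le_mul_of_nonneg_left _ hr0.le
          exact mul_le_mul h2 (hDbound θ) (abs_nonneg _) (by positivity)
      _ ≤ (η * c₁ / (C + 1)) * (c₁⁻¹ * C) := by
          apply mul_le_mul_of_nonneg_right hrC (by positivity)
      _ = η * (C / (C + 1)) := by field_simp
      _ ≤ η * 1 := by
          apply mul_le_mul_of_nonneg_left _ hηpos.le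
          rw [div_le_one (by positivity)]; linarith
      _ = η := mul_one η
  -- rewrite τ r
  set G : ℝ → ℝ := fun θ => s θ * f (s θ) * (-(2*(m:ℝ)) + q θ) with hGdef
  have hτG : τ r = ∫ θ in (0:ℝ)..(-(2 * Real.pi)), G θ := by
    rw [hτ r hrIoo]
    apply intervalIntegral.integral_congr
    intro θ _
    have habsθ := hsabs θ
    simp only [hGdef, hqdef, hsdef, hDdef, hZdef] at habsθ ⊢
    rw [deriv_helper14 u z₀ m γ ε hγ hγpos hu r hrIoo θ, habsθ]
    have hfold : ∀ w : ℝ, r * (-(2*(m:ℝ)) * r⁻¹ + w) = -(2*(m:ℝ)) + r * w := by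
      intro w
      field_simp
    rw [hfold]
  -- pointwise bound
  have hGbound : ∀ θ : ℝ, |G θ - (-(2*(m:ℝ)))| ≤ (2*m + 2) * η := by
    intro θ
    have ha := hsfη θ
    have hq := hqbound θ
    set a : ℝ := s θ * f (s θ)
    have key : G θ - (-(2*(m:ℝ))) = (a - 1) * (-(2*(m:ℝ))) + a * q θ := by
      simp only [G]
      ring
    rw [key]
    have h1 : |(a - 1) * (-(2*(m:ℝ)))| ≤ η * (2*m) := by
      rw [abs_mul, abs_neg, abs_of_nonneg (by positivity : (0:ℝ) ≤ 2*(m:ℝ))]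
      exact mul_le_mul_of_nonneg_right ha (by positivity)
    have h2 : |a * q θ| ≤ (1 + η) * η := by
      rw [abs_mul]
      have haabs : |a| ≤ 1 + η := by
        have := abs_sub_abs_le_abs_sub a 1
        rw [abs_one] at this
        linarith [ha, this]
      exact mul_le_mul haabs hq (abs_nonneg _) (by linarith)
    calc |(a - 1) * (-(2*(m:ℝ))) + a * q θ| ≤ _ + _ := abs_add_le _ _
      _ ≤ η * (2*m) + (1 + η) * η := add_le_add h1 h2
      _ ≤ (2*m + 2) * η := by nlinarith [hηpos.le, hη1]
  -- continuity / integrability of G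
  have hZcont : Continuous Z := by
    apply continuous_const.add
    exact continuous_const.mul (Complex.continuous_exp.comp
      ((Complex.continuous_ofReal).mul continuous_const))
  have hscont : Continuous s := continuous_const.mul (hγ.continuous.comp hZcont)
  have hfscont : Continuous fun θ => f (s θ) :=
    hfcont.comp_continuous hscont fun θ => Set.mem_Ioi.mpr (hspos θ)
  have hDcont : Continuous D := by
    apply Continuous.clm_apply
    · exact (hγ.continuous_fderiv (by simp)).comp hZcont
    · exact Complex.continuous_exp.comp ((Complex.continuous_ofReal).mul continuous_const)
  have hqcont : Continuous q := by
    apply continuous_const.mul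
    exact ((hγ.continuous.comp hZcont).inv₀ fun θ => (hγZpos θ).ne').mul hDcont
  have hGcont : Continuous G := ((hscont.mul hfscont).mul
    (continuous_const.add hqcont))
  -- integral computation
  have hconst : (∫ _ in (0:ℝ)..(-(2 * Real.pi)), (-(2*(m:ℝ)))) = 4 * Real.pi * m := by
    rw [intervalIntegral.integral_const]
    simp
    ring
  have hdiff : τ r - 4 * Real.pi * m
      = ∫ θ in (0:ℝ)..(-(2 * Real.pi)), (G θ - (-(2*(m:ℝ)))) := by
    rw [hτG, ← hconst, ← intervalIntegral.integral_sub
      (hGcont.intervalIntegrable _ _) (intervalIntegrable_const)]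
  rw [Real.dist_eq, hdiff]
  have hnorm : ‖∫ θ in (0:ℝ)..(-(2 * Real.pi)), (G θ - (-(2*(m:ℝ))))‖
      ≤ (2*m + 2) * η * |(-(2 * Real.pi)) - 0| :=
    intervalIntegral.norm_integral_le_of_norm_le_const fun θ _ => by
      simpa [Real.norm_eq_abs] using hGbound θ
  rw [Real.norm_eq_abs] at hnorm
  have habs2π : |(-(2 * Real.pi)) - (0:ℝ)| = 2 * Real.pi := by
    rw [sub_zero, abs_neg, abs_of_pos (by positivity)]
  rw [habs2π] at hnorm
  have hfinal : (2*m + 2) * η * (2 * Real.pi) < e := by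
    have h1 : (2*(m:ℝ) + 2) * η * (2 * Real.pi) = 4 * Real.pi * (m + 1) * η := by ring
    rw [h1]
    have h2 : 4 * Real.pi * ((m:ℝ) + 1) * η ≤ 4 * Real.pi * (m + 1) *
        (e / (4 * Real.pi * (m + 1) + 1)) := by
      apply mul_le_mul_of_nonneg_left hη2 (by positivity)
    have h3 : 4 * Real.pi * ((m:ℝ) + 1) * (e / (4 * Real.pi * (m + 1) + 1)) < e := by
      have hA : (0:ℝ) < 4 * Real.pi * ((m:ℝ) + 1) := by positivity
      calc 4 * Real.pi * ((m:ℝ) + 1) * (e / (4 * Real.pi * (m + 1) + 1))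
          < (4 * Real.pi * ((m:ℝ) + 1) + 1) * (e / (4 * Real.pi * (m + 1) + 1)) :=
            mul_lt_mul_of_pos_right (lt_add_one _) (by positivity)
        _ = e := by field_simp
    linarith
  linarith [hnorm, hfinal]
end

section
/- For the gauge field constructed via u = exp(v/2 + iθ), A₁ = -Re{2i ∂̄ ln u}, A₂ = -Im{2i ∂̄ ln u}, the covariant derivatives satisfy D₁u = u ∂v and D₂u = i u ∂v where ∂ = (∂₁ - i∂₂)/2, and consequently |D₁u|² + |D₂u|² = (1/2)|∇v|² e^v away from the zeros and poles of u. -/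
/-!
Since `u = exp (v/2 + iθ)` near each point of `Ω`, `∂ⱼu = u ∂ⱼ(v/2 + iθ)`, and the gauge field
works out to `A = ∇θ + (∂₂v, -∂₁v)/2`. Subtracting `iAⱼu` cancels the phase gradient, leaving
`D₁u = u ∂v` and `D₂u = i u ∂v`; the energy identity then follows from `|u|² = e^v`.
-/

/-- Partial derivative `∂₁` of a complex-valued function on `ℂ ≅ ℝ²`. -/
noncomputable def pd1 (g : ℂ → ℂ) (z : ℂ) : ℂ := fderiv ℝ g z 1

/-- Partial derivative `∂₂` of a complex-valued function on `ℂ ≅ ℝ²`. -/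
noncomputable def pd2 (g : ℂ → ℂ) (z : ℂ) : ℂ := fderiv ℝ g z Complex.I

/-- The operator `∂̄ = (∂₁ + i∂₂)/2`. -/
noncomputable def dbar (g : ℂ → ℂ) (z : ℂ) : ℂ := (pd1 g z + Complex.I * pd2 g z) / 2

/-- Partial derivative `∂₁` of a real-valued function on `ℂ ≅ ℝ²`. -/
noncomputable def rd1 (v : ℂ → ℝ) (z : ℂ) : ℝ := fderiv ℝ v z 1

/-- Partial derivative `∂₂` of a real-valued function on `ℂ ≅ ℝ²`. -/
noncomputable def rd2 (v : ℂ → ℝ) (z : ℂ) : ℝ := fderiv ℝ v z Complex.I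

open Complex Filter Topology

section PhaseAmplitude

variable {v θ : ℂ → ℝ} {u : ℂ → ℂ} {z : ℂ}

theorem fderiv_apply_of_eventuallyEq_exp (hv : DifferentiableAt ℝ v z)
    (hθ : DifferentiableAt ℝ θ z)
    (hu : u =ᶠ[𝓝 z] fun w => cexp ((v w : ℂ) / 2 + (θ w : ℂ) * I)) (e : ℂ) :
    fderiv ℝ u z e = u z * ((fderiv ℝ v z e : ℂ) / 2 + (fderiv ℝ θ z e : ℂ) * I) := by
  have hv' := (ofRealCLM.hasFDerivAt.comp z hv.hasFDerivAt).mul_const (2⁻¹ : ℂ)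
  have hθ' := (ofRealCLM.hasFDerivAt.comp z hθ.hasFDerivAt).mul_const I
  have hexp := (hv'.add hθ').cexp
  simp only [div_eq_mul_inv] at hu ⊢
  rw [(hexp.congr_of_eventuallyEq hu).fderiv, hu.eq_of_nhds]
  simp only [Function.comp_apply, ofRealCLM_apply, Pi.add_apply, smul_add, add_apply, smul_apply,
    ContinuousLinearMap.comp_apply, smul_eq_mul]
  ring

theorem pd1_of_eventuallyEq_exp (hv : DifferentiableAt ℝ v z) (hθ : DifferentiableAt ℝ θ z)
    (hu : u =ᶠ[𝓝 z] fun w => cexp ((v w : ℂ) / 2 + (θ w : ℂ) * I)) :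
    pd1 u z = u z * ((rd1 v z : ℂ) / 2 + (rd1 θ z : ℂ) * I) :=
  fderiv_apply_of_eventuallyEq_exp hv hθ hu 1

theorem pd2_of_eventuallyEq_exp (hv : DifferentiableAt ℝ v z) (hθ : DifferentiableAt ℝ θ z)
    (hu : u =ᶠ[𝓝 z] fun w => cexp ((v w : ℂ) / 2 + (θ w : ℂ) * I)) :
    pd2 u z = u z * ((rd2 v z : ℂ) / 2 + (rd2 θ z : ℂ) * I) :=
  fderiv_apply_of_eventuallyEq_exp hv hθ hu I

theorem norm_sq_of_eventuallyEq_exp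
    (hu : u =ᶠ[𝓝 z] fun w => cexp ((v w : ℂ) / 2 + (θ w : ℂ) * I)) :
    ‖u z‖ ^ 2 = Real.exp (v z) := by
  rw [hu.eq_of_nhds, norm_exp, sq, ← Real.exp_add]
  simp

theorem two_I_mul_dbar_div_of_eventuallyEq_exp (hv : DifferentiableAt ℝ v z)
    (hθ : DifferentiableAt ℝ θ z)
    (hu : u =ᶠ[𝓝 z] fun w => cexp ((v w : ℂ) / 2 + (θ w : ℂ) * I)) :
    2 * I * dbar u z / u z =
      (-(rd1 θ z + rd2 v z / 2) : ℝ) + ((rd1 v z / 2 - rd2 θ z : ℝ) : ℂ) * I := by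
  have hu0 : u z ≠ 0 := hu.eq_of_nhds ▸ exp_ne_zero _
  rw [dbar, pd1_of_eventuallyEq_exp hv hθ hu, pd2_of_eventuallyEq_exp hv hθ hu]
  field_simp
  push_cast
  linear_combination (2 * (rd1 θ z : ℂ) + rd2 v z + 2 * I * rd2 θ z) * I_sq

end PhaseAmplitude

theorem norm_sq_half_sub_I_mul (a b : ℝ) :
    ‖((a : ℂ) - I * b) / 2‖ ^ 2 = (a ^ 2 + b ^ 2) / 4 := by
  rw [Complex.sq_norm, normSq_apply]
  simp only [div_ofNat_re, sub_re, ofReal_re, mul_re, I_re, zero_mul, I_im, ofReal_im, mul_zero,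
    sub_self, sub_zero, div_ofNat_im, sub_im, mul_im, one_mul, zero_add, zero_sub]
  ring

/-- For `u = exp(v/2 + iθ)`, `A₁ = -Re{2i ∂̄ ln u}`, `A₂ = -Im{2i ∂̄ ln u}`
(so `2i ∂̄ ln u = 2i (∂̄u)/u`), the covariant derivatives `D_j u = ∂_j u - i A_j u`
satisfy `D₁u = u ∂v` and `D₂u = i u ∂v`, where `∂ = (∂₁ - i∂₂)/2`; consequently
`|D₁u|² + |D₂u|² = (1/2)|∇v|² e^v` away from the zeros and poles of `u`. -/
theorem stmt19 (Ω : Set ℂ) (hΩ : IsOpen Ω) (v θ : ℂ → ℝ)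
    (hv : ∀ z ∈ Ω, DifferentiableAt ℝ v z)
    (hθ : ∀ z ∈ Ω, DifferentiableAt ℝ θ z)
    (u : ℂ → ℂ)
    (hu : ∀ z ∈ Ω, u z = Complex.exp ((v z : ℂ) / 2 + (θ z : ℂ) * Complex.I))
    (A₁ A₂ : ℂ → ℝ)
    (hA₁ : ∀ z ∈ Ω, A₁ z = -(2 * Complex.I * dbar u z / u z).re)
    (hA₂ : ∀ z ∈ Ω, A₂ z = -(2 * Complex.I * dbar u z / u z).im)
    (D₁ D₂ : ℂ → ℂ)
    (hD₁ : ∀ z ∈ Ω, D₁ z = pd1 u z - Complex.I * (A₁ z : ℂ) * u z)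
    (hD₂ : ∀ z ∈ Ω, D₂ z = pd2 u z - Complex.I * (A₂ z : ℂ) * u z) :
    ∀ z ∈ Ω,
      D₁ z = u z * (((rd1 v z : ℂ) - Complex.I * (rd2 v z : ℂ)) / 2) ∧
      D₂ z = Complex.I * u z * (((rd1 v z : ℂ) - Complex.I * (rd2 v z : ℂ)) / 2) ∧
      ‖D₁ z‖ ^ 2 + ‖D₂ z‖ ^ 2 =
        (1 / 2) * ((rd1 v z) ^ 2 + (rd2 v z) ^ 2) * Real.exp (v z) := by
  intro z hz
  have huz : u =ᶠ[𝓝 z] fun w => cexp ((v w : ℂ) / 2 + (θ w : ℂ) * I) :=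
    eventually_of_mem (hΩ.mem_nhds hz) hu
  have hgauge := two_I_mul_dbar_div_of_eventuallyEq_exp (hv z hz) (hθ z hz) huz
  have hA₁z : A₁ z = rd1 θ z + rd2 v z / 2 := by simp [hA₁ z hz, hgauge]
  have hA₂z : A₂ z = rd2 θ z - rd1 v z / 2 := by simp [hA₂ z hz, hgauge]
  have hD₁z : D₁ z = u z * (((rd1 v z : ℂ) - I * (rd2 v z : ℂ)) / 2) := by
    rw [hD₁ z hz, pd1_of_eventuallyEq_exp (hv z hz) (hθ z hz) huz, hA₁z]
    push_cast
    ring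
  have hD₂z : D₂ z = I * u z * (((rd1 v z : ℂ) - I * (rd2 v z : ℂ)) / 2) := by
    rw [hD₂ z hz, pd2_of_eventuallyEq_exp (hv z hz) (hθ z hz) huz, hA₂z]
    push_cast
    linear_combination (u z * rd2 v z / 2) * I_sq
  refine ⟨hD₁z, hD₂z, ?_⟩
  rw [hD₁z, hD₂z, norm_mul, norm_mul, norm_mul, norm_I, mul_pow, mul_pow, one_mul,
    norm_sq_of_eventuallyEq_exp huz, norm_sq_half_sub_I_mul]
  ring
end
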